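/- arXiv:2309.05050 — 6 statements merged into one kernel-verified Lean document; each statement's English description precedes it below -/
import Mathlib

section
/- The equation √(36ξ+3)/4 + sin(2π√(12ξ+1)/3) = 0 has exactly one solution ξ in the open interval (1/4, 2/3). -/
/-!
Substituting `u = √(12ξ + 1)`, which maps `(1/4, 2/3)` increasingly onto `(2, 3)`, and using
`√(36ξ + 3) = √3 u`, the equation becomes `g u = 0` for `g u = √3 u / 4 + sin (2πu / 3)`
(`backboneFn`). On `[2, 3]` the angle `2πu / 3` stays in `[4π/3, 2π]`, where `cos` is
increasing, so `g'` is increasing and `g` is strictly convex. Since `g 2 = 0`, a strictly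
convex `g` has at most one further zero in `(2, 3]`, and one exists in `(9/4, 5/2)` because
`g (9/4) < 0 < g (5/2)`.
-/

open Real Set

section Convex

variable {𝕜 : Type*} [Field 𝕜] [LinearOrder 𝕜] [IsStrictOrderedRing 𝕜] {s : Set 𝕜} {f : 𝕜 → 𝕜}

theorem StrictConvexOn.eq_of_apply_eq_of_lt (hf : StrictConvexOn 𝕜 s f) {a b c : 𝕜}
    (ha : a ∈ s) (hb : b ∈ s) (hc : c ∈ s) (hab : a < b) (hac : a < c)
    (hfb : f b = f a) (hfc : f c = f a) : b = c := by
  have no_third_zero : ∀ {x y : 𝕜}, y ∈ s → a < x → x < y → f x = f a → f y = f a → False :=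
    fun hy hax hxy hfx hfy => by
      simpa [hfx, hfy] using hf.slope_strict_mono_adjacent ha hy hax hxy
  rcases lt_trichotomy b c with hbc | rfl | hcb
  · exact (no_third_zero hc hab hbc hfb hfc).elim
  · rfl
  · exact (no_third_zero hb hac hcb hfc hfb).elim

end Convex

theorem Real.cos_lt_cos_of_pi_le_of_le_two_pi {x y : ℝ} (hx : π ≤ x) (hy : y ≤ 2 * π)
    (hxy : x < y) : cos x < cos y := by
  rw [← cos_two_pi_sub x, ← cos_two_pi_sub y]
  exact cos_lt_cos_of_nonneg_of_le_pi (by linarith) (by linarith) (by linarith)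

noncomputable def backboneFn (u : ℝ) : ℝ := √3 * u / 4 + sin (2 * π * u / 3)

theorem hasDerivAt_backboneFn (u : ℝ) :
    HasDerivAt backboneFn (√3 / 4 + cos (2 * π * u / 3) * (2 * π / 3)) u := by
  have hlin : HasDerivAt (fun u : ℝ => 2 * π * u / 3) (2 * π / 3) u := by
    simpa using ((hasDerivAt_id u).const_mul (2 * π)).div_const 3
  have hsqrt : HasDerivAt (fun u : ℝ => √3 * u / 4) (√3 / 4) u := by
    simpa using ((hasDerivAt_id u).const_mul √3).div_const 4
  exact hsqrt.add ((hasDerivAt_sin _).comp u hlin)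

theorem continuous_backboneFn : Continuous backboneFn :=
  continuous_iff_continuousAt.2 fun u => (hasDerivAt_backboneFn u).continuousAt

theorem strictConvexOn_backboneFn : StrictConvexOn ℝ (Icc 2 3) backboneFn := by
  refine StrictMonoOn.strictConvexOn_of_deriv (convex_Icc 2 3)
    continuous_backboneFn.continuousOn ?_
  rw [interior_Icc]
  intro x hx y hy hxy
  have hπ := pi_pos
  simp only [(hasDerivAt_backboneFn _).deriv]
  have hcos : cos (2 * π * x / 3) < cos (2 * π * y / 3) :=
    cos_lt_cos_of_pi_le_of_le_two_pi (by nlinarith [hx.1]) (by nlinarith [hy.2])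
      (by nlinarith)
  gcongr

theorem backboneFn_two : backboneFn 2 = 0 := by
  rw [backboneFn, show 2 * π * 2 / 3 = π / 3 + π by ring, sin_add_pi, sin_pi_div_three]
  ring

theorem backboneFn_nine_fourths_neg : backboneFn (9 / 4) < 0 := by
  rw [backboneFn, show 2 * π * (9 / 4) / 3 = π / 2 + π by ring, sin_add_pi, sin_pi_div_two]
  nlinarith [sq_sqrt (show (0 : ℝ) ≤ 3 by norm_num), sqrt_nonneg 3]

theorem backboneFn_five_halves_pos : 0 < backboneFn (5 / 2) := by
  rw [backboneFn, show 2 * π * (5 / 2) / 3 = -(π / 3) + 2 * π by ring, sin_add_two_pi, sin_neg,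
    sin_pi_div_three]
  linarith [sqrt_pos.2 (show (0 : ℝ) < 3 by norm_num)]

theorem existsUnique_backboneFn_eq_zero : ∃! u, u ∈ Ioo (2 : ℝ) 3 ∧ backboneFn u = 0 := by
  obtain ⟨u, hu, hgu⟩ : ∃ u ∈ Ioo (9 / 4 : ℝ) (5 / 2), backboneFn u = 0 :=
    intermediate_value_Ioo (by norm_num) continuous_backboneFn.continuousOn
      ⟨backboneFn_nine_fourths_neg, backboneFn_five_halves_pos⟩
  have hu' : u ∈ Ioo (2 : ℝ) 3 := ⟨by linarith [hu.1], by linarith [hu.2]⟩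
  refine ⟨u, ⟨hu', hgu⟩, fun v ⟨hv, hgv⟩ => ?_⟩
  have h2 : (2 : ℝ) ∈ Icc (2 : ℝ) 3 := by norm_num
  exact strictConvexOn_backboneFn.eq_of_apply_eq_of_lt h2 (Ioo_subset_Icc_self hv)
    (Ioo_subset_Icc_self hu') hv.1 hu'.1 (by rw [hgv, backboneFn_two])
    (by rw [hgu, backboneFn_two])

theorem sqrt_mul_add_eq_backboneFn (ξ : ℝ) :
    √(36 * ξ + 3) / 4 + sin (2 * π * √(12 * ξ + 1) / 3) = backboneFn √(12 * ξ + 1) := by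
  rw [show 36 * ξ + 3 = 3 * (12 * ξ + 1) by ring, sqrt_mul (by norm_num), backboneFn]

theorem sqrt_twelve_mul_add_one_mem_Ioo {ξ : ℝ} (hξ : ξ ∈ Ioo (1 / 4 : ℝ) (2 / 3)) :
    √(12 * ξ + 1) ∈ Ioo (2 : ℝ) 3 := by
  constructor
  · rw [lt_sqrt (by norm_num)]; linarith [hξ.1]
  · rw [sqrt_lt' (by norm_num)]; linarith [hξ.2]

/-- The equation `√(36ξ+3)/4 + sin(2π√(12ξ+1)/3) = 0` has exactly one solution
`ξ` in the open interval `(1/4, 2/3)`. -/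
theorem backbone_equation_unique_solution :
    ∃! ξ : ℝ, ξ ∈ Set.Ioo (1/4 : ℝ) (2/3 : ℝ) ∧
      Real.sqrt (36 * ξ + 3) / 4 + Real.sin (2 * π * Real.sqrt (12 * ξ + 1) / 3) = 0 := by
  obtain ⟨u, ⟨hu, hgu⟩, huniq⟩ := existsUnique_backboneFn_eq_zero
  have hsqrt : √(12 * ((u ^ 2 - 1) / 12) + 1) = u := by
    rw [show 12 * ((u ^ 2 - 1) / 12) + 1 = u ^ 2 by ring, sqrt_sq (by linarith [hu.1])]
  refine ⟨(u ^ 2 - 1) / 12, ⟨⟨?_, ?_⟩, ?_⟩, fun ξ ⟨hξ, hξeq⟩ => ?_⟩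
  · nlinarith [hu.1]
  · nlinarith [hu.1, hu.2]
  · rw [sqrt_mul_add_eq_backboneFn, hsqrt, hgu]
  · have hξu : √(12 * ξ + 1) = u :=
      huniq _ ⟨sqrt_twelve_mul_add_one_mem_Ioo hξ, sqrt_mul_add_eq_backboneFn ξ ▸ hξeq⟩
    have := sq_sqrt (show 0 ≤ 12 * ξ + 1 by linarith [hξ.1])
    rw [hξu] at this
    linarith
end

section
/- There is no rational number ρ with 2 < ρ < 3 such that (√3/4)ρ + sin(2πρ/3) = 0. -/
/-!
Put `θ = 2πρ/3`. The equation says `sin θ = -(√3/4)ρ`, so `cos 2θ = 1 - 2 sin² θ = 1 - 3ρ²/8` is a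
rational cosine at the rational multiple `4ρ/3` of `π`. By Niven's theorem it is one of
`-1, -1/2, 0, 1/2, 1`; for `2 < ρ < 3` it lies in `(-19/8, -1/2)`, so it is `-1`, i.e. `ρ² = 16/3`,
which has no rational solution.
-/

open Real

lemma Rat.sq_ne_sixteen_div_three (q : ℚ) : q ^ 2 ≠ 16 / 3 := by
  intro h
  have hsq : IsSquare (16 / 3 : ℚ) := ⟨q, by rw [← h, sq]⟩
  rw [Rat.isSquare_iff] at hsq
  norm_num at hsq

/-- There is no rational `ρ` with `2 < ρ < 3` such that `(√3/4)ρ + sin(2πρ/3) = 0`. -/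
theorem no_rational_zero :
    ¬ ∃ ρ : ℚ, 2 < ρ ∧ ρ < 3 ∧
      Real.sqrt 3 / 4 * (ρ : ℝ) + Real.sin (2 * π * (ρ : ℝ) / 3) = 0 := by
  rintro ⟨ρ, h2, h3, heq⟩
  have hsin : sin (2 * π * ρ / 3) = -(√3 / 4 * ρ) := by linarith
  have hcos : cos ((4 / 3 * ρ : ℚ) * π) = ((1 - 3 / 8 * ρ ^ 2 : ℚ) : ℝ) := by
    have hangle : ((4 / 3 * ρ : ℚ) : ℝ) * π = 2 * (2 * π * ρ / 3) := by push_cast; ring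
    rw [hangle, cos_two_mul_eq_one_sub, hsin, neg_sq, mul_pow, div_pow,
      sq_sqrt (by norm_num : (0 : ℝ) ≤ 3)]
    push_cast
    ring
  have hniven := niven ⟨_, rfl⟩ ⟨_, hcos⟩
  rw [hcos] at hniven
  have hρsq : (ρ : ℝ) ^ 2 = 16 / 3 := by
    have h2' : (2 : ℝ) < ρ := by exact_mod_cast h2
    have h3' : (ρ : ℝ) < 3 := by exact_mod_cast h3
    simp only [Set.mem_insert_iff, Set.mem_singleton_iff] at hniven
    push_cast at hniven
    rcases hniven with h | h | h | h | h <;> nlinarith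
  exact Rat.sq_ne_sixteen_div_three ρ (by rw [← Rat.cast_inj (α := ℝ)]; push_cast; exact hρsq)
end

section
/- For all rational numbers q₁, q₂, q: if cos(π q₁) = q · cos(π q₂), then either both 2cos(π q₁) and 2cos(π q₂) are integers, or q ∈ {0, 1, −1}. -/
/-!
Write `q = a / b` in lowest terms, so that `x = 2 cos (π q₁)` and `y = 2 cos (π q₂)` satisfy
`b x = a y`. Both are of the form `ζ + ζ⁻¹` with `ζ` a root of unity, hence algebraic integers all
of whose conjugates have absolute value at most `2`. As `q ∉ {0, 1, -1}`, one of `|a|`, `b` is at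
least `2`; say `|a| ≥ 2`. Coprimality of `a` and `b` gives `x = a z` and `y = b z` for an algebraic
integer `z`, whose conjugates then lie in the closed unit disc. By Kronecker's theorem `z` is `0`
or a root of unity, and since `z` is real, `z ∈ {0, 1, -1}`; so `x` and `y` are integers.
-/

open Real

theorem IsCoprime.exists_isIntegral_eq_smul {R A : Type*} [CommRing R] [CommRing A] [Algebra R A]
    {a b : R} (hab : IsCoprime a b) {x y : A} (hx : IsIntegral R x) (hy : IsIntegral R y)
    (h : b • x = a • y) : ∃ z, IsIntegral R z ∧ x = a • z ∧ y = b • z := by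
  obtain ⟨u, v, huv⟩ := hab
  refine ⟨u • x + v • y, (hx.smul u).add (hy.smul v), ?_, ?_⟩
  · linear_combination (norm := module) v • h - huv • x
  · linear_combination (norm := module) -u • h - huv • y

theorem Complex.eq_one_or_eq_neg_one_of_pow_eq_one {w : ℂ} {n : ℕ} (hn : n ≠ 0) (hw : w ^ n = 1)
    (him : w.im = 0) : w = 1 ∨ w = -1 := by
  have hre : ((w.re : ℝ) : ℂ) = w := Complex.ext rfl him.symm
  rw [← hre] at hw ⊢
  rcases pow_eq_one_iff_cases.mp (by exact_mod_cast hw : w.re ^ n = 1) with h | h | ⟨h, -⟩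
  · exact absurd h hn
  · simp [h]
  · simp [h]

theorem NumberField.exists_intCast_eq_of_smul_eq_smul {K : Type*} [Field K] [NumberField K]
    {x y : K} (hx : IsIntegral ℤ x) (hy : IsIntegral ℤ y) (hx_le : ∀ φ : K →+* ℂ, ‖φ x‖ ≤ 2)
    {a b : ℤ} (hab : IsCoprime a b) (ha : 2 ≤ |a|) (h : b • x = a • y)
    (ι : K →+* ℂ) (hι : (ι x).im = 0) : ∃ m n : ℤ, ι x = m ∧ ι y = n := by
  obtain ⟨z, hz, rfl, rfl⟩ := hab.exists_isIntegral_eq_smul hx hy h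
  suffices ∃ ε : ℤ, ι z = ε by
    obtain ⟨ε, hε⟩ := this
    exact ⟨a * ε, b * ε, by simp [hε], by simp [hε]⟩
  rcases eq_or_ne z 0 with rfl | hz₀
  · exact ⟨0, by simp⟩
  have hz_le (φ : K →+* ℂ) : ‖φ z‖ ≤ 1 := by
    have hφ := hx_le φ
    rw [map_zsmul, zsmul_eq_mul, norm_mul, Complex.norm_intCast] at hφ
    have ha' : (2 : ℝ) ≤ |(a : ℝ)| := by exact_mod_cast ha
    nlinarith [norm_nonneg (φ z)]
  obtain ⟨n, hn, hzn⟩ := NumberField.Embeddings.pow_eq_one_of_norm_le_one K ℂ hz₀ hz hz_le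
  have him : (ι z).im = 0 := by
    have ha₀ : a ≠ 0 := by rintro rfl; norm_num at ha
    simpa [ha₀] using hι
  rcases Complex.eq_one_or_eq_neg_one_of_pow_eq_one hn.ne' (by rw [← map_pow, hzn, map_one]) him
    with h | h
  · exact ⟨1, by simp [h]⟩
  · exact ⟨-1, by simp [h]⟩

theorem IsIntegral.add_inv_of_pow_eq_one {K : Type*} [Field K] {u : K} {n : ℕ} (hn : n ≠ 0)
    (hu : u ^ n = 1) : IsIntegral ℤ (u + u⁻¹) := by
  have hint (w : K) (hw : w ^ n = 1) : IsIntegral ℤ w :=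
    .of_pow (Nat.pos_of_ne_zero hn) (hw ▸ isIntegral_one)
  exact (hint u hu).add (hint u⁻¹ (by rw [inv_pow, hu, inv_one]))

theorem norm_map_add_inv_le_two_of_pow_eq_one {K : Type*} [Field K] {u : K} {n : ℕ} (hn : n ≠ 0)
    (hu : u ^ n = 1) (φ : K →+* ℂ) : ‖φ (u + u⁻¹)‖ ≤ 2 := by
  have h₁ : ‖φ u‖ = 1 := Complex.norm_eq_one_of_pow_eq_one (by rw [← map_pow, hu, map_one]) hn
  calc ‖φ (u + u⁻¹)‖ ≤ ‖φ u‖ + ‖(φ u)⁻¹‖ := by rw [map_add, map_inv₀]; exact norm_add_le _ _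
    _ = 2 := by rw [norm_inv, h₁]; norm_num

open IntermediateField in
theorem IntermediateField.numberField_adjoin_pair {L : Type*} [Field L] [CharZero L] {x y : L}
    (hx : IsIntegral ℚ x) (hy : IsIntegral ℚ y) : NumberField ℚ⟮x, y⟯ where
  to_finiteDimensional := finiteDimensional_adjoin_pair hx hy

theorem Complex.exp_rat_mul_pi_mul_I_add_inv (q : ℚ) :
    exp (q * π * I) + (exp (q * π * I))⁻¹ = ↑(2 * Real.cos (π * q)) := by
  rw [← exp_neg, ← neg_mul, ← two_cos]
  push_cast
  ring_nf

open IntermediateField in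
theorem Real.exists_int_eq_two_mul_cos_of_isCoprime {a b : ℤ} (hab : IsCoprime a b)
    (ha : 2 ≤ |a|) {q₁ q₂ : ℚ} (h : b * cos (π * q₁) = a * cos (π * q₂)) :
    (∃ m : ℤ, 2 * cos (π * q₁) = m) ∧ ∃ n : ℤ, 2 * cos (π * q₂) = n := by
  set u₁ := Complex.exp (q₁ * π * Complex.I)
  set u₂ := Complex.exp (q₂ * π * Complex.I)
  have := numberField_adjoin_pair (Complex.isIntegral_exp_rat_mul_pi_mul_I q₁).tower_top
    (Complex.isIntegral_exp_rat_mul_pi_mul_I q₂).tower_top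
  let v₁ : ℚ⟮u₁, u₂⟯ := ⟨u₁, mem_adjoin_pair_left ℚ u₁ u₂⟩
  let v₂ : ℚ⟮u₁, u₂⟯ := ⟨u₂, mem_adjoin_pair_right ℚ u₁ u₂⟩
  have hv₁ : v₁ ^ (2 * q₁.den) = 1 := Subtype.ext (Complex.exp_rat_mul_pi_mul_I_pow_two_mul_den q₁)
  have hv₂ : v₂ ^ (2 * q₂.den) = 1 := Subtype.ext (Complex.exp_rat_mul_pi_mul_I_pow_two_mul_den q₂)
  have hx : ((v₁ + v₁⁻¹ : ℚ⟮u₁, u₂⟯) : ℂ) = ↑(2 * cos (π * q₁)) :=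
    Complex.exp_rat_mul_pi_mul_I_add_inv q₁
  have hy : ((v₂ + v₂⁻¹ : ℚ⟮u₁, u₂⟯) : ℂ) = ↑(2 * cos (π * q₂)) :=
    Complex.exp_rat_mul_pi_mul_I_add_inv q₂
  have hrel : b • (v₁ + v₁⁻¹) = a • (v₂ + v₂⁻¹) := by
    have hR : (b : ℝ) * (2 * cos (π * q₁)) = a * (2 * cos (π * q₂)) := by linear_combination 2 * h
    apply (algebraMap ℚ⟮u₁, u₂⟯ ℂ).injective
    rw [map_zsmul, map_zsmul, IntermediateField.algebraMap_apply,
      IntermediateField.algebraMap_apply, hx, hy, zsmul_eq_mul, zsmul_eq_mul]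
    exact_mod_cast hR
  obtain ⟨m, n, hm, hn⟩ := NumberField.exists_intCast_eq_of_smul_eq_smul
    (.add_inv_of_pow_eq_one (by positivity) hv₁) (.add_inv_of_pow_eq_one (by positivity) hv₂)
    (norm_map_add_inv_le_two_of_pow_eq_one (by positivity) hv₁) hab ha hrel
    (algebraMap ℚ⟮u₁, u₂⟯ ℂ) (by rw [IntermediateField.algebraMap_apply, hx, Complex.ofReal_im])
  rw [IntermediateField.algebraMap_apply, hx] at hm
  rw [IntermediateField.algebraMap_apply, hy] at hn
  exact ⟨⟨m, by exact_mod_cast hm⟩, ⟨n, by exact_mod_cast hn⟩⟩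

theorem Rat.two_le_abs_num_or_two_le_den {q : ℚ} (h₀ : q ≠ 0) (h₁ : q ≠ 1) (h₂ : q ≠ -1) :
    2 ≤ |q.num| ∨ 2 ≤ |(q.den : ℤ)| := by
  rcases eq_or_ne q.den 1 with hd | hd
  · have hq : (q.num : ℚ) = q := Rat.coe_int_num_of_den_eq_one hd
    left
    by_contra! hlt
    obtain h | h | h : q.num = -1 ∨ q.num = 0 ∨ q.num = 1 := by rw [abs_lt] at hlt; omega
    all_goals simp_all
  · right
    rw [Nat.abs_cast]
    have := q.den_pos
    omega

/-- For rationals `q₁, q₂, q`: if `cos(π q₁) = q · cos(π q₂)` then either both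
`2cos(π q₁)` and `2cos(π q₂)` are integers, or `q ∈ {0, 1, −1}`. -/
theorem rational_cosine_relation (q₁ q₂ q : ℚ)
    (h : Real.cos (π * (q₁ : ℝ)) = (q : ℝ) * Real.cos (π * (q₂ : ℝ))) :
    ((∃ m : ℤ, 2 * Real.cos (π * (q₁ : ℝ)) = (m : ℝ)) ∧
      (∃ n : ℤ, 2 * Real.cos (π * (q₂ : ℝ)) = (n : ℝ))) ∨
    q = 0 ∨ q = 1 ∨ q = -1 := by
  by_cases hq : q = 0 ∨ q = 1 ∨ q = -1
  · exact .inr hq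
  push Not at hq
  have hrel : ((q.den : ℤ) : ℝ) * cos (π * q₁) = q.num * cos (π * q₂) := by
    rw [h, Rat.cast_def]
    field_simp
    push_cast
    ring
  left
  rcases Rat.two_le_abs_num_or_two_le_den hq.1 hq.2.1 hq.2.2 with hnum | hden
  · exact exists_int_eq_two_mul_cos_of_isCoprime (Rat.isCoprime_num_den q) hnum hrel
  · exact (exists_int_eq_two_mul_cos_of_isCoprime (Rat.isCoprime_num_den q).symm hden
      hrel.symm).symm
end

section
/- For every ε ∈ (0,1) and all real a, b > 0, the integral ∫₀^∞ ((1+t)^(−a) − (1+t)^(−b)) · t^(−1−ε) dt converges absolutely and equals Γ(−ε)·Γ(ε+a)/Γ(a) − Γ(−ε)·Γ(ε+b)/Γ(b). -/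
/-!
Splitting `(1+t)^(-a) - (1+t)^(-b)` as `((1+t)^(-a) - 1) - ((1+t)^(-b) - 1)`, it suffices to
show `∫₀^∞ ((1+t)^(-c) - 1) t^(-1-ε) dt = Γ(-ε) Γ(ε+c) / Γ(c)` for `c > 0`; this integral
converges because `|(1+t)^(-c) - 1| ≤ min (c t) 1`. Integrating by parts against `-t^(-ε)/ε`
(the same bound kills the boundary terms) turns it into `-(c/ε) ∫₀^∞ t^(-ε) (1+t)^(-c-1) dt`,
which the substitution `x = t/(1+t)` identifies with `-(c/ε) B(1-ε, c+ε)`. The functional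
equations `Γ(c+1) = c Γ(c)` and `Γ(1-ε) = -ε Γ(-ε)` finish the computation.
-/

open Real MeasureTheory

open Set Filter Topology

theorem integrableOn_and_setIntegral_beta_Ioo {u v : ℝ} (hu : 0 < u) (hv : 0 < v) :
    IntegrableOn (fun x : ℝ => x ^ (u - 1) * (1 - x) ^ (v - 1)) (Ioo 0 1) ∧
    ∫ x in Ioo (0 : ℝ) 1, x ^ (u - 1) * (1 - x) ^ (v - 1) = Gamma u * Gamma v / Gamma (u + v) := by
  have hcast : ∀ x ∈ Ioo (0 : ℝ) 1, ((x ^ (u - 1) * (1 - x) ^ (v - 1) : ℝ) : ℂ) =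
      (x : ℂ) ^ ((u : ℂ) - 1) * (1 - (x : ℂ)) ^ ((v : ℂ) - 1) := fun x hx => by
    push_cast [Complex.ofReal_cpow hx.1.le, Complex.ofReal_cpow (sub_nonneg.2 hx.2.le)]
    rfl
  have hC : IntegrableOn (fun x : ℝ => (x : ℂ) ^ ((u : ℂ) - 1) * (1 - (x : ℂ)) ^ ((v : ℂ) - 1))
      (Ioo 0 1) :=
    (Complex.betaIntegral_convergent (by simpa) (by simpa)).1.mono_set Ioo_subset_Ioc_self
  refine ⟨IntegrableOn.congr_fun hC.re (fun x hx => by simp [← hcast x hx]) measurableSet_Ioo,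
    Complex.ofReal_injective ?_⟩
  calc ((∫ x in Ioo (0 : ℝ) 1, x ^ (u - 1) * (1 - x) ^ (v - 1) : ℝ) : ℂ)
      = ∫ x in Ioo (0 : ℝ) 1, (x : ℂ) ^ ((u : ℂ) - 1) * (1 - (x : ℂ)) ^ ((v : ℂ) - 1) :=
        integral_ofReal.symm.trans (setIntegral_congr_fun measurableSet_Ioo hcast)
    _ = Complex.betaIntegral u v := by
        rw [Complex.betaIntegral, intervalIntegral.integral_of_le zero_le_one,
          integral_Ioc_eq_integral_Ioo]
    _ = _ := by
        rw [Complex.betaIntegral_eq_Gamma_mul_div _ _ (by simpa) (by simpa)]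
        push_cast [← Complex.Gamma_ofReal]
        rfl

theorem integrableOn_and_setIntegral_beta_Ioi {u v : ℝ} (hu : 0 < u) (hv : 0 < v) :
    IntegrableOn (fun t : ℝ => t ^ (u - 1) * (1 + t) ^ (-u - v)) (Ioi 0) ∧
    ∫ t in Ioi (0 : ℝ), t ^ (u - 1) * (1 + t) ^ (-u - v) = Gamma u * Gamma v / Gamma (u + v) := by
  set σ : ℝ → ℝ := fun t => 1 - (1 + t)⁻¹
  set g : ℝ → ℝ := fun x => x ^ (u - 1) * (1 - x) ^ (v - 1)
  have hσ' : ∀ t ∈ Ioi (0 : ℝ), HasDerivWithinAt σ (((1 + t) ^ 2)⁻¹) (Ioi 0) t := fun t ht => by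
    have h1t : 1 + t ≠ 0 := by linarith [mem_Ioi.1 ht]
    exact ((((hasDerivAt_id' t).const_add 1).inv h1t).const_sub 1).hasDerivWithinAt.congr_deriv
      (by ring)
  have hσinj : InjOn σ (Ioi 0) := fun s _ t _ hst => by simpa [σ] using hst
  have hσimage : σ '' Ioi 0 = Ioo 0 1 := by
    ext x
    refine ⟨?_, fun hx => ⟨x / (1 - x), div_pos hx.1 (by linarith [hx.2]), ?_⟩⟩
    · rintro ⟨t, ht : 0 < t, rfl⟩
      have : (1 + t)⁻¹ < 1 := inv_lt_one_of_one_lt₀ (by linarith)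
      exact ⟨by simpa [σ] using this, by simp [σ]; positivity⟩
    · have : 1 - x ≠ 0 := by linarith [hx.2]
      simp only [σ]
      field_simp
      ring
  have hsubst : ∀ t ∈ Ioi (0 : ℝ),
      |((1 + t) ^ 2)⁻¹| • g (σ t) = t ^ (u - 1) * (1 + t) ^ (-u - v) := fun t (ht : 0 < t) => by
    have h1t : 0 < 1 + t := by linarith
    have hσt : σ t = t * (1 + t)⁻¹ := by simp only [σ]; field_simp; ring
    have h1σt : 1 - σ t = (1 + t)⁻¹ := by simp only [σ]; ring
    rw [smul_eq_mul, abs_of_pos (by positivity), ← rpow_two, ← rpow_neg h1t.le]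
    simp only [g]
    rw [h1σt, hσt, mul_rpow ht.le (inv_nonneg.2 h1t.le), inv_rpow h1t.le, inv_rpow h1t.le,
      ← rpow_neg h1t.le, ← rpow_neg h1t.le,
      show -u - v = -(u - 1) + -(v - 1) + -2 by ring, rpow_add h1t, rpow_add h1t]
    ring
  obtain ⟨hint, hval⟩ := integrableOn_and_setIntegral_beta_Ioo hu hv
  rw [← hσimage] at hint hval
  refine ⟨((integrableOn_image_iff_integrableOn_abs_deriv_smul measurableSet_Ioi hσ' hσinj g).1
    hint).congr_fun hsubst measurableSet_Ioi, ?_⟩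
  rw [← setIntegral_congr_fun measurableSet_Ioi hsubst, ← hval,
    integral_image_eq_integral_abs_deriv_smul measurableSet_Ioi hσ' hσinj g]

theorem one_sub_mul_le_one_add_rpow_neg {c t : ℝ} (hc : 0 ≤ c) (ht : -1 < t) :
    1 - c * t ≤ (1 + t) ^ (-c) := by
  have h1t : 0 < 1 + t := by linarith
  calc 1 - c * t ≤ log (1 + t) * (-c) + 1 := by nlinarith [log_le_sub_one_of_pos h1t]
    _ ≤ exp (log (1 + t) * (-c)) := add_one_le_exp _
    _ = (1 + t) ^ (-c) := (rpow_def_of_pos h1t _).symm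

theorem abs_one_add_rpow_neg_sub_one_le_mul {c t : ℝ} (hc : 0 ≤ c) (ht : 0 ≤ t) :
    |(1 + t) ^ (-c) - 1| ≤ c * t := by
  rw [abs_of_nonpos (sub_nonpos.2 (rpow_le_one_of_one_le_of_nonpos (by linarith) (by linarith)))]
  linarith [one_sub_mul_le_one_add_rpow_neg hc (by linarith : -1 < t)]

theorem abs_one_add_rpow_neg_sub_one_le_one {c t : ℝ} (hc : 0 ≤ c) (ht : 0 ≤ t) :
    |(1 + t) ^ (-c) - 1| ≤ 1 := by
  rw [abs_of_nonpos (sub_nonpos.2 (rpow_le_one_of_one_le_of_nonpos (by linarith) (by linarith)))]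
  linarith [rpow_nonneg (by linarith : 0 ≤ 1 + t) (-c)]

theorem integrableOn_one_add_rpow_neg_sub_one_mul_rpow {c ε : ℝ} (hc : 0 ≤ c) (hε0 : 0 < ε)
    (hε1 : ε < 1) :
    IntegrableOn (fun t : ℝ => ((1 + t) ^ (-c) - 1) * t ^ (-1 - ε)) (Ioi 0) := by
  have hmeas : AEStronglyMeasurable (fun t : ℝ => ((1 + t) ^ (-c) - 1) * t ^ (-1 - ε)) :=
    (by fun_prop : Measurable _).aestronglyMeasurable
  have hnorm : ∀ t, 0 < t →
      ‖((1 + t) ^ (-c) - 1) * t ^ (-1 - ε)‖ = |(1 + t) ^ (-c) - 1| * t ^ (-1 - ε) := fun t ht => by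
    rw [norm_mul, norm_of_nonneg (rpow_nonneg ht.le _), Real.norm_eq_abs]
  have hnear : IntegrableOn (fun t : ℝ => ((1 + t) ^ (-c) - 1) * t ^ (-1 - ε)) (Ioc 0 1) := by
    refine Integrable.mono' ((intervalIntegral.intervalIntegrable_rpow' (r := -ε)
      (by linarith)).1.const_mul c) hmeas.restrict ((ae_restrict_iff' measurableSet_Ioc).2
      (ae_of_all _ fun t ht => ?_))
    calc ‖((1 + t) ^ (-c) - 1) * t ^ (-1 - ε)‖ ≤ c * t * t ^ (-1 - ε) := by
          rw [hnorm t ht.1]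
          gcongr
          exacts [rpow_nonneg ht.1.le _, abs_one_add_rpow_neg_sub_one_le_mul hc ht.1.le]
      _ = c * t ^ (-ε) := by
          rw [mul_assoc, ← rpow_one_add' ht.1.le (by linarith), show 1 + (-1 - ε) = -ε by ring]
  have hfar : IntegrableOn (fun t : ℝ => ((1 + t) ^ (-c) - 1) * t ^ (-1 - ε)) (Ioi 1) := by
    refine Integrable.mono' (integrableOn_Ioi_rpow_of_lt (by linarith : -1 - ε < -1) zero_lt_one)
      hmeas.restrict ((ae_restrict_iff' measurableSet_Ioi).2
      (ae_of_all _ fun t (ht : 1 < t) => ?_))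
    rw [hnorm t (by linarith)]
    exact mul_le_of_le_one_left (rpow_nonneg (by linarith) _)
      (abs_one_add_rpow_neg_sub_one_le_one hc (by linarith))
  rw [← Ioc_union_Ioi_eq_Ioi zero_le_one]
  exact hnear.union hfar

theorem integral_one_add_rpow_neg_sub_one_mul_rpow {c ε : ℝ} (hc : 0 < c) (hε0 : 0 < ε)
    (hε1 : ε < 1) :
    ∫ t in Ioi (0 : ℝ), ((1 + t) ^ (-c) - 1) * t ^ (-1 - ε) =
      Gamma (-ε) * Gamma (ε + c) / Gamma c := by
  set f : ℝ → ℝ := fun t => (1 + t) ^ (-c) - 1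
  set g : ℝ → ℝ := fun t => -ε⁻¹ * t ^ (-ε)
  have hf : ∀ t ∈ Ioi (0 : ℝ), HasDerivAt f (-c * (1 + t) ^ (-c - 1)) t := fun t (ht : 0 < t) =>
    (((hasDerivAt_id' t).const_add 1).rpow_const (Or.inl (by linarith))).sub_const 1
      |>.congr_deriv (by ring)
  have hg : ∀ t ∈ Ioi (0 : ℝ), HasDerivAt g (t ^ (-1 - ε)) t := fun t (ht : 0 < t) =>
    ((hasDerivAt_rpow_const (Or.inl ht.ne')).const_mul _).congr_deriv (by
      rw [show -1 - ε = -ε - 1 by ring]; field_simp)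
  obtain ⟨hJint, hJ⟩ := integrableOn_and_setIntegral_beta_Ioi (u := 1 - ε) (v := c + ε)
    (by linarith) (by linarith)
  rw [show 1 - ε - 1 = -ε by ring, show -(1 - ε) - (c + ε) = -c - 1 by ring] at hJint hJ
  rw [show 1 - ε + (c + ε) = c + 1 by ring] at hJ
  have hf'g : ∀ t, -c * (1 + t) ^ (-c - 1) * g t = c * ε⁻¹ * (t ^ (-ε) * (1 + t) ^ (-c - 1)) :=
    fun t => by simp only [g]; ring
  have hfg : ∀ t, 0 < t → ‖f t * g t‖ = ε⁻¹ * (|f t| * t ^ (-ε)) := fun t ht => by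
    rw [norm_mul, norm_mul, norm_neg, norm_inv, norm_of_nonneg hε0.le,
      norm_of_nonneg (rpow_nonneg ht.le _), mul_left_comm, Real.norm_eq_abs]
  have h_zero : Tendsto (f * g) (𝓝[>] 0) (𝓝 0) := by
    have hlim : Tendsto (fun t : ℝ => ε⁻¹ * c * t ^ (1 - ε)) (𝓝[>] 0) (𝓝 0) := by
      simpa [zero_rpow (by linarith : 1 - ε ≠ 0)] using ((continuousAt_rpow_const 0 (1 - ε)
        (Or.inr (by linarith))).tendsto.mono_left nhdsWithin_le_nhds).const_mul (ε⁻¹ * c)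
    refine squeeze_zero_norm' (eventually_nhdsWithin_of_forall fun t (ht : 0 < t) => ?_) hlim
    rw [Pi.mul_apply, hfg t ht, mul_assoc, sub_eq_add_neg, rpow_one_add' ht.le (by linarith),
      ← mul_assoc c]
    gcongr
    exact abs_one_add_rpow_neg_sub_one_le_mul hc.le ht.le
  have h_infty : Tendsto (f * g) atTop (𝓝 0) := by
    refine squeeze_zero_norm' ((eventually_gt_atTop 0).mono fun t ht => ?_)
      (by simpa using (tendsto_rpow_neg_atTop hε0).const_mul ε⁻¹)
    rw [Pi.mul_apply, hfg t ht]
    gcongr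
    exact mul_le_of_le_one_left (rpow_nonneg ht.le _)
      (abs_one_add_rpow_neg_sub_one_le_one hc.le ht.le)
  refine (integral_Ioi_mul_deriv_eq_deriv_mul hf hg
    (integrableOn_one_add_rpow_neg_sub_one_mul_rpow hc.le hε0 hε1)
    (IntegrableOn.congr_fun (hJint.const_mul (c * ε⁻¹)) (fun t _ => (hf'g t).symm)
      measurableSet_Ioi) h_zero h_infty).trans ?_
  simp only [hf'g]
  rw [integral_const_mul, hJ, Gamma_add_one hc.ne', show 1 - ε = -ε + 1 by ring,
    Gamma_add_one (neg_ne_zero.2 hε0.ne'), add_comm c ε]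
  field_simp
  ring

/-- For `ε ∈ (0,1)` and `a, b > 0`, the integral
`∫₀^∞ ((1+t)^(−a) − (1+t)^(−b))·t^(−1−ε) dt` converges absolutely and equals
`Γ(−ε)Γ(ε+a)/Γ(a) − Γ(−ε)Γ(ε+b)/Γ(b)`. -/
theorem gamma_difference_integral (ε a b : ℝ) (hε : ε ∈ Set.Ioo (0 : ℝ) 1)
    (ha : 0 < a) (hb : 0 < b) :
    IntegrableOn (fun t : ℝ => ((1 + t) ^ (-a) - (1 + t) ^ (-b)) * t ^ (-1 - ε))
      (Set.Ioi 0) ∧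
    ∫ t in Set.Ioi (0 : ℝ), ((1 + t) ^ (-a) - (1 + t) ^ (-b)) * t ^ (-1 - ε) =
      Real.Gamma (-ε) * Real.Gamma (ε + a) / Real.Gamma a -
        Real.Gamma (-ε) * Real.Gamma (ε + b) / Real.Gamma b := by
  obtain ⟨hε0, hε1⟩ := hε
  have hIa := integrableOn_one_add_rpow_neg_sub_one_mul_rpow ha.le hε0 hε1
  have hIb := integrableOn_one_add_rpow_neg_sub_one_mul_rpow hb.le hε0 hε1
  have hsplit : (fun t : ℝ => ((1 + t) ^ (-a) - (1 + t) ^ (-b)) * t ^ (-1 - ε)) =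
      fun t => ((1 + t) ^ (-a) - 1) * t ^ (-1 - ε) - ((1 + t) ^ (-b) - 1) * t ^ (-1 - ε) := by
    ext t
    ring
  rw [hsplit]
  exact ⟨hIa.sub hIb, by
    rw [integral_sub hIa hIb, integral_one_add_rpow_neg_sub_one_mul_rpow ha hε0 hε1,
      integral_one_add_rpow_neg_sub_one_mul_rpow hb hε0 hε1]⟩
end

section
/- For all real a, b with −1 < a < 0 and −1 < b < 0, the integral ∫₀^∞ (t^a − t^b)/(t − 1) dt converges and equals π·(cot(πb) − cot(πa)). -/
/-!
Split the integral at `t = 1`. The substitution `t ↦ 1/t` maps `(1, ∞)` onto `(0, 1)` and turns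
the integrand for `(a, b)` into the one for `(-1 - b, -1 - a)`, so only integrals over `(0, 1)`
are needed. There, expanding `1/(1 - t)` as a geometric series and integrating termwise gives
`∑ₙ (1/(n + b + 1) - 1/(n + a + 1))`. After shifting the index of the second series by one, the
two series combine into the difference of the Mittag-Leffler expansions
`π cot πx = 1/x + ∑ₙ (1/(x - (n + 1)) + 1/(x + (n + 1)))` at `x = b` and `x = a`.
-/

open Real MeasureTheory Set Filter Topology

namespace MeasureTheory

variable {α E : Type*} [MeasurableSpace α] {μ : Measure α} [NormedAddCommGroup E]

theorem Integrable.of_hasSum_of_summable_integral_norm {F : ℕ → α → E} {f : α → E}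
    (hF : ∀ n, Integrable (F n) μ) (hF_sum : Summable fun n ↦ ∫ a, ‖F n a‖ ∂μ)
    (hf : ∀ᵐ a ∂μ, HasSum (F · a) (f a)) :
    Integrable f μ := by
  refine ⟨aestronglyMeasurable_of_tendsto_ae atTop
    (fun n ↦ Finset.aestronglyMeasurable_fun_sum _ fun i _ ↦ (hF i).1)
    (hf.mono fun a ha ↦ ha.tendsto_sum_nat), ?_⟩
  calc ∫⁻ a, ‖f a‖ₑ ∂μ ≤ ∫⁻ a, ∑' n, ‖F n a‖ₑ ∂μ :=
        lintegral_mono_ae (hf.mono fun a ha ↦ ha.tsum_eq ▸ enorm_tsum_le_tsum_enorm)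
    _ = ∑' n, ∫⁻ a, ‖F n a‖ₑ ∂μ := lintegral_tsum fun n ↦ (hF n).1.enorm
    _ = ENNReal.ofReal (∑' n, ∫ a, ‖F n a‖ ∂μ) := by
        rw [ENNReal.ofReal_tsum_of_nonneg (fun n ↦ integral_nonneg fun a ↦ norm_nonneg _) hF_sum]
        simp_rw [ofReal_integral_norm_eq_lintegral_enorm (hF _)]
    _ < ⊤ := ENNReal.ofReal_lt_top

end MeasureTheory

section InvSubstitution

variable {E : Type*} [NormedAddCommGroup E] [NormedSpace ℝ E]

theorem image_inv_Ioo_zero_one : (·⁻¹) '' Ioo (0 : ℝ) 1 = Ioi 1 := by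
  rw [image_inv_eq_inv, inv_Ioo_0_left one_pos, inv_one]

theorem integrableOn_Ioi_one_iff_comp_inv (g : ℝ → E) :
    IntegrableOn g (Ioi 1) ↔ IntegrableOn (fun s ↦ (s ^ 2)⁻¹ • g s⁻¹) (Ioo 0 1) := by
  rw [← image_inv_Ioo_zero_one, integrableOn_image_iff_integrableOn_abs_deriv_smul
    measurableSet_Ioo (fun s hs ↦ (hasDerivAt_inv hs.1.ne').hasDerivWithinAt)
    inv_injective.injOn]
  simp only [abs_neg, abs_inv, abs_pow, sq_abs]

theorem integral_Ioi_one_eq_integral_comp_inv (g : ℝ → E) :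
    ∫ x in Ioi 1, g x = ∫ s in Ioo 0 1, (s ^ 2)⁻¹ • g s⁻¹ := by
  rw [← image_inv_Ioo_zero_one, integral_image_eq_integral_abs_deriv_smul
    measurableSet_Ioo (fun s hs ↦ (hasDerivAt_inv hs.1.ne').hasDerivWithinAt)
    inv_injective.injOn]
  simp only [abs_neg, abs_inv, abs_pow, sq_abs]

end InvSubstitution

theorem summable_one_div_add_sub_one_div_add {p q : ℝ} (hp : 0 < p) (hq : 0 < q) :
    Summable fun n : ℕ ↦ 1 / (n + p) - 1 / (n + q) := by
  have hsq (c : ℝ) : Summable fun n : ℕ ↦ 1 / |n + c| ^ (2 : ℝ) :=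
    (Real.summable_one_div_nat_add_rpow c 2).2 one_lt_two
  refine (((hsq p).add (hsq q)).mul_left |q - p|).of_norm_bounded fun n ↦ ?_
  have hx : 0 < n + p := by positivity
  have hy : 0 < n + q := by positivity
  rw [abs_of_pos hx, abs_of_pos hy, rpow_two, rpow_two, div_sub_div _ _ hx.ne' hy.ne',
    norm_div, norm_mul, Real.norm_of_nonneg hx.le, Real.norm_of_nonneg hy.le, Real.norm_eq_abs,
    show 1 * (n + q) - (n + p) * 1 = q - p by ring, div_le_iff₀ (by positivity)]
  have hxy : 1 ≤ (1 / (n + p) ^ 2 + 1 / (n + q) ^ 2) * ((n + p) * (n + q)) := by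
    rw [div_add_div _ _ (by positivity) (by positivity), div_mul_eq_mul_div,
      le_div_iff₀ (by positivity)]
    nlinarith [sq_nonneg ((n : ℝ) + p - (n + q)), mul_pos hx hy]
  simpa [mul_assoc] using mul_le_mul_of_nonneg_left hxy (abs_nonneg (q - p))

theorem Real.hasSum_cot_sub_one_div {x : ℝ} (hx : ∀ n : ℤ, (n : ℝ) ≠ x) :
    HasSum (fun n : ℕ ↦ 1 / (x - (n + 1)) + 1 / (x + (n + 1))) (π * cot (π * x) - 1 / x) := by
  have hxℂ : (x : ℂ) ∈ Complex.integerComplement := fun ⟨n, hn⟩ ↦ hx n (mod_cast hn)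
  have h := (summable_cotTerm hxℂ).hasSum
  rw [← cot_series_rep' hxℂ] at h
  refine Complex.hasSum_ofReal.1 ?_
  push_cast [Complex.ofReal_cot]
  exact h

theorem cot_sub_cot_eq_of_hasSum {a b S₀ S₁ : ℝ} (ha : ∀ n : ℤ, (n : ℝ) ≠ a)
    (hb : ∀ n : ℤ, (n : ℝ) ≠ b)
    (h₀ : HasSum (fun n : ℕ ↦ 1 / (n + (b + 1)) - 1 / (n + (a + 1))) S₀)
    (h₁ : HasSum (fun n : ℕ ↦ 1 / (n - a) - 1 / (n - b)) S₁) :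
    S₀ + S₁ = π * (cot (π * b) - cot (π * a)) := by
  have hshift := (hasSum_nat_add_iff' 1).2 h₁
  rw [Finset.sum_range_one, Nat.cast_zero, zero_sub, zero_sub, div_neg, div_neg] at hshift
  have hcot := (Real.hasSum_cot_sub_one_div hb).sub (Real.hasSum_cot_sub_one_div ha)
  have hterm (n : ℕ) :
      1 / (n + (b + 1)) - 1 / (n + (a + 1)) + (1 / ((n + 1 : ℕ) - a) - 1 / ((n + 1 : ℕ) - b)) =
        1 / (b - (n + 1)) + 1 / (b + (n + 1)) - (1 / (a - (n + 1)) + 1 / (a + (n + 1))) := by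
    rw [← neg_sub (n + 1 : ℝ) b, ← neg_sub (n + 1 : ℝ) a, div_neg, div_neg]
    push_cast
    ring
  linear_combination (h₀.add hshift).unique (hcot.congr_fun hterm)

theorem intCast_ne_of_mem_Ioo_neg_one_zero {x : ℝ} (hx : x ∈ Ioo (-1 : ℝ) 0) (n : ℤ) :
    (n : ℝ) ≠ x := by
  rintro rfl
  have h₁ : (-1 : ℤ) < n := by exact_mod_cast hx.1
  have h₂ : n < 0 := by exact_mod_cast hx.2
  omega

noncomputable def rpowDiffQuot (a b t : ℝ) : ℝ := (t ^ a - t ^ b) / (t - 1)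

theorem rpowDiffQuot_swap (a b : ℝ) : rpowDiffQuot b a = -rpowDiffQuot a b := by
  ext t
  simp only [rpowDiffQuot, Pi.neg_apply, ← neg_div, neg_sub]

theorem hasSum_rpow_nat_add {t : ℝ} (ht₀ : 0 < t) (ht₁ : t < 1) (c : ℝ) :
    HasSum (fun n : ℕ ↦ t ^ (n + c)) (t ^ c / (1 - t)) := by
  refine ((hasSum_geometric_of_lt_one ht₀.le ht₁).mul_left (t ^ c)).congr_fun fun n ↦ ?_
  rw [rpow_add ht₀, rpow_natCast, mul_comm]

theorem hasSum_rpowDiffQuot {t : ℝ} (ht₀ : 0 < t) (ht₁ : t < 1) (a b : ℝ) :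
    HasSum (fun n : ℕ ↦ t ^ (n + b) - t ^ (n + a)) (rpowDiffQuot a b t) := by
  have h := (hasSum_rpow_nat_add ht₀ ht₁ b).sub (hasSum_rpow_nat_add ht₀ ht₁ a)
  rwa [← sub_div, ← neg_div_neg_eq, neg_sub, neg_sub] at h

theorem inv_sq_mul_rpowDiffQuot_inv {s : ℝ} (hs : 0 < s) (a b : ℝ) :
    (s ^ 2)⁻¹ * rpowDiffQuot a b s⁻¹ = rpowDiffQuot (-1 - b) (-1 - a) s := by
  simp only [rpowDiffQuot, inv_rpow hs.le, rpow_sub hs, rpow_neg_one]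
  rcases eq_or_ne s 1 with rfl | hs1
  · simp
  have : 1 - s ≠ 0 := sub_ne_zero.2 hs1.symm
  field_simp
  ring

theorem integral_rpow_Ioo_zero_one {c : ℝ} (hc : -1 < c) :
    ∫ t in Ioo 0 1, t ^ c = 1 / (c + 1) := by
  rw [← integral_Ioc_eq_integral_Ioo, ← intervalIntegral.integral_of_le zero_le_one,
    integral_rpow (Or.inl hc), one_rpow, zero_rpow (by linarith), sub_zero]

theorem integrableOn_rpowDiffQuot_Ioo_and_hasSum {a b : ℝ} (hb : -1 < b) (hba : b ≤ a) :
    IntegrableOn (rpowDiffQuot a b) (Ioo 0 1) ∧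
      HasSum (fun n : ℕ ↦ 1 / (n + (b + 1)) - 1 / (n + (a + 1)))
        (∫ t in Ioo 0 1, rpowDiffQuot a b t) := by
  set F : ℕ → ℝ → ℝ := fun n t ↦ t ^ (n + b) - t ^ (n + a)
  have hexp (n : ℕ) {c : ℝ} (hc : -1 < c) : -1 < n + c := by linarith [n.cast_nonneg (α := ℝ)]
  have hpow (n : ℕ) {c : ℝ} (hc : -1 < c) : IntegrableOn (fun t : ℝ ↦ t ^ (n + c)) (Ioo 0 1) :=
    (intervalIntegral.integrableOn_Ioo_rpow_iff one_pos).2 (hexp n hc)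
  have ha : -1 < a := hb.trans_le hba
  have hF_int (n : ℕ) : IntegrableOn (F n) (Ioo 0 1) := (hpow n hb).sub (hpow n ha)
  have hF_integral (n : ℕ) : ∫ t in Ioo 0 1, F n t = 1 / (n + (b + 1)) - 1 / (n + (a + 1)) := by
    rw [integral_sub (hpow n hb) (hpow n ha), integral_rpow_Ioo_zero_one (hexp n hb),
      integral_rpow_Ioo_zero_one (hexp n ha), add_assoc, add_assoc]
  have hF_norm (n : ℕ) : ∫ t in Ioo 0 1, ‖F n t‖ = ∫ t in Ioo 0 1, F n t :=
    setIntegral_congr_fun measurableSet_Ioo fun t ht ↦ norm_of_nonneg <| sub_nonneg.2 <|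
      rpow_le_rpow_of_exponent_ge ht.1 ht.2.le (by linarith)
  have hF_sum : Summable fun n ↦ ∫ t in Ioo 0 1, ‖F n t‖ := by
    simp only [hF_norm, hF_integral]
    exact summable_one_div_add_sub_one_div_add (by linarith) (by linarith)
  have hF_hasSum : ∀ᵐ t ∂volume.restrict (Ioo 0 1), HasSum (F · t) (rpowDiffQuot a b t) :=
    ae_restrict_of_forall_mem measurableSet_Ioo fun t ht ↦ hasSum_rpowDiffQuot ht.1 ht.2 a b
  refine ⟨.of_hasSum_of_summable_integral_norm hF_int hF_sum hF_hasSum, ?_⟩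
  rw [integral_congr_ae (hF_hasSum.mono fun t ht ↦ ht.tsum_eq.symm)]
  simpa only [hF_integral] using hasSum_integral_of_summable_integral_norm hF_int hF_sum

theorem integrableOn_rpowDiffQuot_Ioi_and_hasSum {a b : ℝ} (ha : a < 0) (hba : b ≤ a) :
    IntegrableOn (rpowDiffQuot a b) (Ioi 1) ∧
      HasSum (fun n : ℕ ↦ 1 / (n - a) - 1 / (n - b)) (∫ t in Ioi 1, rpowDiffQuot a b t) := by
  have hcomp : EqOn (fun s ↦ (s ^ 2)⁻¹ • rpowDiffQuot a b s⁻¹)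
      (rpowDiffQuot (-1 - b) (-1 - a)) (Ioo 0 1) :=
    fun s hs ↦ inv_sq_mul_rpowDiffQuot_inv hs.1 a b
  obtain ⟨hint, hsum⟩ :=
    integrableOn_rpowDiffQuot_Ioo_and_hasSum (a := -1 - b) (b := -1 - a) (by linarith) (by linarith)
  rw [integrableOn_Ioi_one_iff_comp_inv, integral_Ioi_one_eq_integral_comp_inv,
    setIntegral_congr_fun measurableSet_Ioo hcomp, integrableOn_congr_fun hcomp measurableSet_Ioo]
  exact ⟨hint, hsum.congr_fun fun n ↦ by ring_nf⟩

/-- For `−1 < a < 0` and `−1 < b < 0`, the integral `∫₀^∞ (t^a − t^b)/(t − 1) dt`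
converges and equals `π(cot(πb) − cot(πa))`. -/
theorem cot_integral (a b : ℝ) (ha : a ∈ Set.Ioo (-1 : ℝ) 0) (hb : b ∈ Set.Ioo (-1 : ℝ) 0) :
    IntegrableOn (fun t : ℝ => (t ^ a - t ^ b) / (t - 1)) (Set.Ioi 0) ∧
    ∫ t in Set.Ioi (0 : ℝ), (t ^ a - t ^ b) / (t - 1) =
      π * (Real.cot (π * b) - Real.cot (π * a)) := by
  change IntegrableOn (rpowDiffQuot a b) (Ioi 0) ∧ ∫ t in Ioi 0, rpowDiffQuot a b t = _
  wlog hba : b ≤ a generalizing a b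
  · obtain ⟨hint, hval⟩ := this b a hb ha (le_of_not_ge hba)
    rw [rpowDiffQuot_swap] at hint hval
    simp only [Pi.neg_apply, integral_neg] at hval
    exact ⟨by simpa using hint.neg, by linarith⟩
  obtain ⟨hint₀, hsum₀⟩ := integrableOn_rpowDiffQuot_Ioo_and_hasSum hb.1 hba
  obtain ⟨hint₁, hsum₁⟩ := integrableOn_rpowDiffQuot_Ioi_and_hasSum ha.2 hba
  rw [← integrableOn_Ioc_iff_integrableOn_Ioo] at hint₀
  rw [← Ioc_union_Ioi_eq_Ioi zero_le_one, setIntegral_union Ioc_disjoint_Ioi_same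
    measurableSet_Ioi hint₀ hint₁, integral_Ioc_eq_integral_Ioo]
  exact ⟨hint₀.union hint₁, cot_sub_cot_eq_of_hasSum (intCast_ne_of_mem_Ioo_neg_one_zero ha)
    (intCast_ne_of_mem_Ioo_neg_one_zero hb) hsum₀ hsum₁⟩
end

section
/- The unique solution ξ ∈ (1/4, 2/3) of the equation √(36ξ+3)/4 + sin(2π√(12ξ+1)/3) = 0 satisfies 0.3566668367128 < ξ < 0.3566668367129. -/
/-!
Write `θ(ξ) = 2π√(12ξ+1)/3`. Since `√(36ξ+3) = √3 · √(12ξ+1)`, the left-hand side of the equation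
is `g(θ(ξ))` with `g(θ) = cθ + sin θ`, `c = 3√3/(8π)`, and `θ` maps `(1/4, 2/3)` increasingly into
`(4π/3, 2π)`. On `[π, 2π]` the function `g` is strictly convex and it vanishes at `4π/3`; hence once
`g` is nonnegative at a point to the right of `4π/3`, it is positive at every later point. So the
equation has at most one root, and a sign change of `g ∘ θ` between the two decimal endpoints
locates it. The signs at the endpoints are certified with `π` to twenty digits and the alternating
Taylor series of `cos`, since `sin θ = -cos (θ - 3π/2)` with `θ - 3π/2 ≈ 0.1`.
-/

open Real Set Finset

theorem Real.cos_sub_three_pi_div_two (x : ℝ) : cos (x - 3 * π / 2) = -sin x := by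
  rw [show x - 3 * π / 2 = x - π / 2 - π by ring, cos_sub_pi, cos_sub_pi_div_two]

section

open Nat

theorem Real.antitone_pow_two_mul_div_factorial {x : ℝ} (hx : x ^ 2 ≤ 2) :
    Antitone fun n : ℕ => x ^ (2 * n) / (2 * n)! := by
  refine antitone_nat_of_succ_le fun n => ?_
  have hfac : ((2 * (n + 1))! : ℝ) = (2 * n + 1) * (2 * n + 2) * (2 * n)! := by
    rw [show 2 * (n + 1) = 2 * n + 1 + 1 by ring, factorial_succ, factorial_succ]
    push_cast
    ring
  have hratio : x ^ 2 ≤ (2 * n + 1) * (2 * n + 2) := by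
    nlinarith [(n.cast_nonneg : (0 : ℝ) ≤ n)]
  have hpow : 0 ≤ x ^ (2 * n) * (2 * n)! := mul_nonneg (by rw [pow_mul]; positivity) (by positivity)
  rw [hfac, show x ^ (2 * (n + 1)) = x ^ 2 * x ^ (2 * n) by ring,
    div_le_div_iff₀ (by positivity) (by positivity)]
  nlinarith [mul_le_mul_of_nonneg_right hratio hpow]

theorem Real.sum_range_two_mul_le_cos {x : ℝ} (hx : x ^ 2 ≤ 2) (k : ℕ) :
    ∑ i ∈ range (2 * k), (-1) ^ i * (x ^ (2 * i) / (2 * i)!) ≤ cos x := by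
  refine (antitone_pow_two_mul_div_factorial hx).alternating_series_le_tendsto ?_ k
  simpa only [mul_div_assoc] using (hasSum_cos x).tendsto_sum_nat

theorem Real.cos_le_sum_range_two_mul_add_one {x : ℝ} (hx : x ^ 2 ≤ 2) (k : ℕ) :
    cos x ≤ ∑ i ∈ range (2 * k + 1), (-1) ^ i * (x ^ (2 * i) / (2 * i)!) := by
  refine (antitone_pow_two_mul_div_factorial hx).tendsto_le_alternating_series ?_ k
  simpa only [mul_div_assoc] using (hasSum_cos x).tendsto_sum_nat

end

theorem strictConvexOn_sin_Icc_pi_two_pi : StrictConvexOn ℝ (Icc π (2 * π)) sin := by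
  apply strictConvexOn_of_deriv2_pos (convex_Icc _ _) continuousOn_sin fun θ hθ => ?_
  rw [interior_Icc] at hθ
  have : sin θ < 0 := by
    rw [← sin_sub_two_pi]
    exact sin_neg_of_neg_of_neg_pi_lt (by linarith [hθ.2]) (by linarith [hθ.1])
  simpa

theorem strictConvexOn_mul_add_sin (c : ℝ) :
    StrictConvexOn ℝ (Icc π (2 * π)) fun θ => c * θ + sin θ :=
  ((LinearMap.mulLeft ℝ c).convexOn (convex_Icc _ _)).add_strictConvexOn
    strictConvexOn_sin_Icc_pi_two_pi

theorem StrictConvexOn.pos_of_nonneg_of_lt {𝕜 β : Type*} [Field 𝕜] [LinearOrder 𝕜]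
    [IsStrictOrderedRing 𝕜] [AddCommMonoid β] [LinearOrder β] [IsOrderedAddMonoid β]
    [Module 𝕜 β] [PosSMulStrictMono 𝕜 β] {s : Set 𝕜} {g : 𝕜 → β} (hg : StrictConvexOn 𝕜 s g)
    {a x y : 𝕜} (ha : a ∈ s) (hy : y ∈ s) (hga : g a = 0) (hax : a < x) (hxy : x < y)
    (hx : 0 ≤ g x) : 0 < g y := by
  by_contra! hgy
  have hay := hax.trans hxy
  have := hg.lt_on_openSegment ha hy hay.ne (by rw [openSegment_eq_Ioo hay]; exact ⟨hax, hxy⟩)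
  rw [hga, max_eq_left hgy] at this
  exact this.not_ge hx

def StrictSingleCrossingOn {α β : Type*} [LT α] [Preorder β] [Zero β] (f : α → β) (s : Set α) :
    Prop :=
  ∀ x ∈ s, ∀ y ∈ s, x < y → 0 ≤ f x → 0 < f y

namespace StrictSingleCrossingOn

variable {α β : Type*} [LinearOrder α] [Preorder β] [Zero β] {f : α → β} {s : Set α}

theorem eq_of_map_eq_zero (hf : StrictSingleCrossingOn f s) {x y : α} (hx : x ∈ s) (hy : y ∈ s)
    (hfx : f x = 0) (hfy : f y = 0) : x = y := by
  rcases lt_trichotomy x y with hxy | hxy | hxy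
  · exact absurd (hf x hx y hy hxy hfx.ge) hfy.not_gt
  · exact hxy
  · exact absurd (hf y hy x hx hxy hfy.ge) hfx.not_gt

theorem lt_of_map_neg (hf : StrictSingleCrossingOn f s) {a ξ : α} (ha : a ∈ s) (hξ : ξ ∈ s)
    (hfa : f a < 0) (hfξ : f ξ = 0) : a < ξ := by
  by_contra! h
  rcases h.lt_or_eq with h | rfl
  · exact (hf ξ hξ a ha h hfξ.ge).not_gt hfa
  · exact hfa.ne hfξ

theorem lt_of_map_pos (hf : StrictSingleCrossingOn f s) {b ξ : α} (hb : b ∈ s) (hξ : ξ ∈ s)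
    (hfb : 0 < f b) (hfξ : f ξ = 0) : ξ < b := by
  by_contra! h
  rcases h.lt_or_eq with h | rfl
  · exact (hf b hb ξ hξ h hfb.le).ne' hfξ
  · exact hfb.ne' hfξ

end StrictSingleCrossingOn

noncomputable def backboneFun (ξ : ℝ) : ℝ :=
  √(36 * ξ + 3) / 4 + sin (2 * π * √(12 * ξ + 1) / 3)

theorem continuous_backboneFun : Continuous backboneFun := by
  unfold backboneFun
  fun_prop

theorem backboneFun_eq_mul_add_sin (ξ : ℝ) :
    backboneFun ξ = 3 * √3 / (8 * π) * (2 * π * √(12 * ξ + 1) / 3)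
      + sin (2 * π * √(12 * ξ + 1) / 3) := by
  rw [backboneFun, show 36 * ξ + 3 = 3 * (12 * ξ + 1) by ring, sqrt_mul zero_le_three]
  field_simp [pi_ne_zero]
  ring

theorem backboneFun_eq_sub_cos (ξ : ℝ) :
    backboneFun ξ = √(36 * ξ + 3) / 4 - cos (2 * π * √(12 * ξ + 1) / 3 - 3 * π / 2) := by
  rw [backboneFun, cos_sub_three_pi_div_two, sub_neg_eq_add]

theorem mul_add_sin_four_pi_div_three : 3 * √3 / (8 * π) * (4 * π / 3) + sin (4 * π / 3) = 0 := by
  rw [show 4 * π / 3 = π / 3 + π by ring, sin_add_pi, sin_pi_div_three]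
  field_simp [pi_ne_zero]
  ring

theorem strictSingleCrossingOn_backboneFun :
    StrictSingleCrossingOn backboneFun (Ioo (1 / 4) (2 / 3)) := by
  intro x hx y hy hxy h
  have hx2 : 2 < √(12 * x + 1) := (lt_sqrt zero_le_two).2 (by linarith [hx.1])
  have hy3 : √(12 * y + 1) < 3 := (sqrt_lt' three_pos).2 (by linarith [hy.2])
  have hxy' : √(12 * x + 1) < √(12 * y + 1) := sqrt_lt_sqrt (by linarith [hx.1]) (by linarith)
  have hπ := pi_pos
  rw [backboneFun_eq_mul_add_sin] at h ⊢
  refine (strictConvexOn_mul_add_sin _).pos_of_nonneg_of_lt (a := 4 * π / 3) ?_ ?_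
    mul_add_sin_four_pi_div_three ?_ ?_ h
  · constructor <;> linarith
  · constructor <;> nlinarith
  · nlinarith
  · nlinarith

-- `backboneFun` is about `-1.5e-13` at the left endpoint and `1.7e-14` at the right one; the
-- decimals below round the square roots and `θ - 3π/2` well within these margins.
theorem backboneFun_neg : backboneFun 0.3566668367128 < 0 := by
  have hr : √(36 * 0.3566668367128 + 3) < 3.979950517488981 :=
    (sqrt_lt' (by norm_num)).2 (by norm_num)
  have hu : √(12 * 0.3566668367128 + 1) < 2.297825502633653 :=
    (sqrt_lt' (by norm_num)).2 (by norm_num)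
  have hu' : 2.25 < √(12 * 0.3566668367128 + 1) := (lt_sqrt (by norm_num)).2 (by norm_num)
  have hx0 : 0 ≤ 2 * π * √(12 * 0.3566668367128 + 1) / 3 - 3 * π / 2 := by nlinarith [pi_pos]
  have hx : 2 * π * √(12 * 0.3566668367128 + 1) / 3 - 3 * π / 2 ≤ 0.10016549848542 := by
    nlinarith [pi_pos, pi_lt_d20]
  have hcos := cos_le_cos_of_nonneg_of_le_pi hx0 (by linarith [pi_gt_three]) hx
  have hsum := sum_range_two_mul_le_cos (x := 0.10016549848542) (by norm_num) 3
  norm_num [sum_range_succ, Nat.factorial] at hsum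
  rw [backboneFun_eq_sub_cos]
  linarith

theorem backboneFun_pos : 0 < backboneFun 0.3566668367129 := by
  have hr : 3.979950517489432 < √(36 * 0.3566668367129 + 3) :=
    (lt_sqrt (by norm_num)).2 (by norm_num)
  have hu : 2.297825502633914 < √(12 * 0.3566668367129 + 1) :=
    (lt_sqrt (by norm_num)).2 (by norm_num)
  have hu' : √(12 * 0.3566668367129 + 1) < 3 := (sqrt_lt' (by norm_num)).2 (by norm_num)
  have hx : 0.10016549848596 ≤ 2 * π * √(12 * 0.3566668367129 + 1) / 3 - 3 * π / 2 := by
    nlinarith [pi_pos, pi_gt_d20]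
  have hxπ : 2 * π * √(12 * 0.3566668367129 + 1) / 3 - 3 * π / 2 ≤ π := by nlinarith [pi_pos]
  have hcos := cos_le_cos_of_nonneg_of_le_pi (by norm_num) hxπ hx
  have hsum := cos_le_sum_range_two_mul_add_one (x := 0.10016549848596) (by norm_num) 3
  norm_num [sum_range_succ, Nat.factorial] at hsum
  rw [backboneFun_eq_sub_cos]
  linarith

/-- The unique solution `ξ ∈ (1/4, 2/3)` of `√(36ξ+3)/4 + sin(2π√(12ξ+1)/3) = 0`
satisfies `0.3566668367128 < ξ < 0.3566668367129`. -/
theorem backbone_exponent_numerics :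
    (∃! ξ : ℝ, ξ ∈ Set.Ioo (1/4 : ℝ) (2/3 : ℝ) ∧
      Real.sqrt (36 * ξ + 3) / 4 + Real.sin (2 * π * Real.sqrt (12 * ξ + 1) / 3) = 0) ∧
    ∀ ξ : ℝ, ξ ∈ Set.Ioo (1/4 : ℝ) (2/3 : ℝ) →
      Real.sqrt (36 * ξ + 3) / 4 + Real.sin (2 * π * Real.sqrt (12 * ξ + 1) / 3) = 0 →
      0.3566668367128 < ξ ∧ ξ < 0.3566668367129 := by
  have hL : (0.3566668367128 : ℝ) ∈ Ioo (1 / 4 : ℝ) (2 / 3) := by norm_num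
  have hU : (0.3566668367129 : ℝ) ∈ Ioo (1 / 4 : ℝ) (2 / 3) := by norm_num
  have hcross := strictSingleCrossingOn_backboneFun
  obtain ⟨ξ₀, hξ₀, hroot⟩ := intermediate_value_Ioo (by norm_num)
    continuous_backboneFun.continuousOn (mem_Ioo.2 ⟨backboneFun_neg, backboneFun_pos⟩)
  have hξ₀' : ξ₀ ∈ Ioo (1 / 4 : ℝ) (2 / 3) := ⟨hL.1.trans hξ₀.1, hξ₀.2.trans hU.2⟩
  refine ⟨⟨ξ₀, ⟨hξ₀', hroot⟩, fun ξ hξ => hcross.eq_of_map_eq_zero hξ.1 hξ₀' hξ.2 hroot⟩,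
    fun ξ hξ h0 => ⟨hcross.lt_of_map_neg hL hξ backboneFun_neg h0,
      hcross.lt_of_map_pos hU hξ backboneFun_pos h0⟩⟩
end
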